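/- arXiv:2306.00602 — 3 statements merged into one kernel-verified Lean document; each statement's English description precedes it below -/
import Mathlib

section
/- Let H be a real Hilbert space, let d ≥ 1 and m ≥ 1, let a₁, …, a_d ∈ H, and let φ₁, …, φ_m ∈ H be vectors whose Gram matrix K ∈ ℝ^{m×m}, K_{ij} = ⟪φ_i, φ_j⟫, is invertible. For each l = 1, …, d define v_l ∈ ℝ^m by (v_l)_i = ⟪a_l, φ_i⟫. Then the supremum of Σ_{l=1}^d ⟪g_l, a_l⟫ over all tuples (g₁, …, g_d) ∈ H^d satisfying Σ_{l=1}^d ‖g_l‖² ≤ 1 and ⟪g_l, φ_i⟫ = 0 for all l = 1, …, d and i = 1, …, m, equals sqrt( Σ_{l=1}^d ( ‖a_l‖² − v_lᵀ K⁻¹ v_l ) ). -/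
/-!
Write `pₗ = ∑ᵢ (K⁻¹ vₗ)ᵢ φᵢ`. Invertibility of the Gram matrix makes `aₗ - pₗ` orthogonal to every
`φᵢ`, so `pₗ` is the orthogonal projection of `aₗ` onto `span φ` and
`‖aₗ - pₗ‖² = ‖aₗ‖² - vₗᵀ K⁻¹ vₗ`. For admissible `g` the objective is therefore
`∑ₗ ⟪gₗ, aₗ - pₗ⟫`, an inner product in `L²(Fin d; H)`, so by Cauchy–Schwarz its supremum over the
unit ball is the norm of `(aₗ - pₗ)ₗ`, attained at that vector normalised.
-/

open scoped RealInnerProductSpace Matrix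
open Matrix

section

variable {E H ι κ : Type*} [NormedAddCommGroup E] [InnerProductSpace ℝ E]
  [NormedAddCommGroup H] [InnerProductSpace ℝ H]

theorem isGreatest_inner_of_inner_eq (U : Submodule ℝ E) {a b : E} (hb : b ∈ U)
    (hab : ∀ g ∈ U, ⟪g, a⟫ = ⟪g, b⟫) :
    IsGreatest {s | ∃ g ∈ U, ‖g‖ ≤ 1 ∧ s = ⟪g, a⟫} ‖b‖ := by
  refine ⟨⟨‖b‖⁻¹ • b, U.smul_mem _ hb, ?_, ?_⟩, ?_⟩
  · rw [norm_smul, norm_inv, norm_norm]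
    exact inv_mul_le_one
  · rw [hab _ (U.smul_mem _ hb), real_inner_smul_left, real_inner_self_eq_norm_sq, sq,
      ← mul_assoc, inv_mul_mul_self]
  · rintro s ⟨g, hg, hg_le, rfl⟩
    calc ⟪g, a⟫ = ⟪g, b⟫ := hab g hg
      _ ≤ ‖g‖ * ‖b‖ := real_inner_le_norm g b
      _ ≤ ‖b‖ := mul_le_of_le_one_left (norm_nonneg b) hg_le

section Gram

variable [Fintype κ] (φ : κ → H)

theorem inner_sum_smul_left_eq_gram_mulVec (c : κ → ℝ) (j : κ) :
    ⟪∑ i, c i • φ i, φ j⟫ = (gram ℝ φ *ᵥ c) j := by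
  simp only [sum_inner, real_inner_smul_left, mulVec, dotProduct, gram_apply]
  exact Finset.sum_congr rfl fun i _ => by rw [real_inner_comm, mul_comm]

variable [DecidableEq κ]

/-- `a - gramResidual φ a` is the orthogonal projection of `a` onto `span ℝ (Set.range φ)`
when `gram ℝ φ` is invertible. -/
noncomputable def gramResidual (a : H) : H :=
  a - ∑ i, ((gram ℝ φ)⁻¹ *ᵥ fun j => ⟪a, φ j⟫) i • φ i

variable {φ}

theorem inner_gramResidual_left_eq_zero (hφ : IsUnit (gram ℝ φ)) (a : H) (j : κ) :
    ⟪gramResidual φ a, φ j⟫ = 0 := by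
  rw [gramResidual, inner_sub_left, inner_sum_smul_left_eq_gram_mulVec, mulVec_mulVec,
    mul_nonsing_inv _ ((isUnit_iff_isUnit_det _).1 hφ), one_mulVec, sub_self]

theorem inner_gramResidual_right_of_orthogonal {g : H} (hg : ∀ i, ⟪g, φ i⟫ = 0) (a : H) :
    ⟪g, gramResidual φ a⟫ = ⟪g, a⟫ := by
  simp [gramResidual, inner_sub_right, inner_sum, real_inner_smul_right, hg]

theorem norm_sq_gramResidual (hφ : IsUnit (gram ℝ φ)) (a : H) :
    ‖gramResidual φ a‖ ^ 2 =
      ‖a‖ ^ 2 - (fun i => ⟪a, φ i⟫) ⬝ᵥ ((gram ℝ φ)⁻¹ *ᵥ fun i => ⟪a, φ i⟫) := by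
  rw [← real_inner_self_eq_norm_sq,
    inner_gramResidual_right_of_orthogonal (inner_gramResidual_left_eq_zero hφ a), gramResidual,
    inner_sub_left, real_inner_self_eq_norm_sq, dotProduct_comm]
  simp only [real_inner_comm a, inner_sum, real_inner_smul_right, dotProduct]

end Gram

section Tuples

variable [Fintype ι] (ι) (φ : κ → H)

def orthogonalTuples : Submodule ℝ (PiLp 2 fun _ : ι => H) where
  carrier := {g | ∀ l i, ⟪g.ofLp l, φ i⟫ = 0}
  add_mem' hg hh l i := by simp [inner_add_left, hg l i, hh l i]
  zero_mem' l i := by simp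
  smul_mem' c g hg l i := by simp [real_inner_smul_left, hg l i]

theorem setOf_sum_inner_eq_setOf_inner (a : ι → H) :
    {s : ℝ | ∃ g : ι → H,
        (∑ l, ‖g l‖ ^ 2 ≤ 1) ∧ (∀ l, ∀ i, ⟪g l, φ i⟫ = 0) ∧ s = ∑ l, ⟪g l, a l⟫} =
      {s | ∃ g ∈ orthogonalTuples ι φ, ‖g‖ ≤ 1 ∧ s = ⟪g, WithLp.toLp 2 a⟫} := by
  ext s
  constructor
  · rintro ⟨g, hg_le, hg, rfl⟩
    exact ⟨WithLp.toLp 2 g, hg, by simpa [PiLp.norm_eq_of_L2] using hg_le,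
      by simp [PiLp.inner_apply]⟩
  · rintro ⟨g, hg, hg_le, rfl⟩
    exact ⟨g.ofLp, by simpa [PiLp.norm_eq_of_L2] using hg_le, hg, by simp [PiLp.inner_apply]⟩

end Tuples

end

theorem tksd_closed_form_general
    {H : Type*} [NormedAddCommGroup H] [InnerProductSpace ℝ H]
    {d m : ℕ}
    (a : Fin d → H) (φ : Fin m → H)
    (K : Matrix (Fin m) (Fin m) ℝ) (hK : ∀ i j, K i j = ⟪φ i, φ j⟫)
    (hKinv : IsUnit K)
    (v : Fin d → Fin m → ℝ) (hv : ∀ l i, v l i = ⟪a l, φ i⟫) :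
    sSup {s : ℝ | ∃ g : Fin d → H,
        (∑ l, ‖g l‖ ^ 2 ≤ 1) ∧ (∀ l, ∀ i, ⟪g l, φ i⟫ = 0) ∧ s = ∑ l, ⟪g l, a l⟫}
      = Real.sqrt (∑ l, (‖a l‖ ^ 2 - v l ⬝ᵥ (K⁻¹ *ᵥ v l))) := by
  obtain rfl : K = gram ℝ φ := Matrix.ext hK
  obtain rfl : v = fun l i => ⟪a l, φ i⟫ := funext fun l => funext (hv l)
  set r : PiLp 2 (fun _ : Fin d => H) := WithLp.toLp 2 fun l => gramResidual φ (a l)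
  have hr : r ∈ orthogonalTuples (Fin d) φ := fun l => inner_gramResidual_left_eq_zero hKinv (a l)
  have hr_norm : ‖r‖ = √(∑ l, (‖a l‖ ^ 2 - (fun i => ⟪a l, φ i⟫) ⬝ᵥ
      ((gram ℝ φ)⁻¹ *ᵥ fun i => ⟪a l, φ i⟫))) := by
    simp only [r, PiLp.norm_eq_of_L2, norm_sq_gramResidual hKinv]
  rw [← hr_norm, setOf_sum_inner_eq_setOf_inner]
  refine (isGreatest_inner_of_inner_eq _ hr fun g hg => ?_).csSup_eq
  simp only [r, PiLp.inner_apply]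
  exact Finset.sum_congr rfl fun l _ => (inner_gramResidual_right_of_orthogonal (hg l) _).symm

/-- Closed form of the constrained supremum underlying the TKSD (Theorem 5.5):
the supremum of `∑ l, ⟪g l, a l⟫` over tuples `g` in the unit ball of `H^d` that are
orthogonal to all boundary features `φ i` equals
`√(∑ l, ‖a l‖² − vₗᵀ K⁻¹ vₗ)` where `K` is the Gram matrix of the `φ i`. -/
theorem tksd_closed_form
    {H : Type*} [NormedAddCommGroup H] [InnerProductSpace ℝ H] [CompleteSpace H]
    {d m : ℕ} (hd : 1 ≤ d) (hm : 1 ≤ m)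
    (a : Fin d → H) (φ : Fin m → H)
    (K : Matrix (Fin m) (Fin m) ℝ) (hK : ∀ i j, K i j = ⟪φ i, φ j⟫)
    (hKinv : IsUnit K)
    (v : Fin d → Fin m → ℝ) (hv : ∀ l i, v l i = ⟪a l, φ i⟫) :
    sSup {s : ℝ | ∃ g : Fin d → H,
        (∑ l, ‖g l‖ ^ 2 ≤ 1) ∧ (∀ l, ∀ i, ⟪g l, φ i⟫ = 0) ∧ s = ∑ l, ⟪g l, a l⟫}
      = Real.sqrt (∑ l, (‖a l‖ ^ 2 - v l ⬝ᵥ (K⁻¹ *ᵥ v l))) :=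
  tksd_closed_form_general a φ K hK hKinv v hv
end

section
/- Let d ≥ 1 and let a, b ∈ ℝ^d with a_l < b_l for every coordinate l; set V = Icc a b (the closed rectangular box) with interior int(V) and topological boundary ∂V. Let q : ℝ^d → ℝ be continuous on V and differentiable on int(V), with q(x) > 0 for all x ∈ V, and let g : ℝ^d → ℝ^d be continuous on V and differentiable on int(V) with g(x') = 0 for every x' ∈ ∂V. Assume x ↦ Σ_{l=1}^d ( ∂_{x_l} q(x) · g_l(x) + q(x) · ∂_{x_l} g_l(x) ) is integrable on V. Then ∫_V Σ_{l=1}^d ( ∂_{x_l} q(x) g_l(x) + q(x) ∂_{x_l} g_l(x) ) dx = 0; equivalently, if q is a probability density supported on V, then E_{x∼q}[ Σ_{l=1}^d ( ∂_{x_l} log q(x) · g_l(x) + ∂_{x_l} g_l(x) ) ] = 0. -/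
open MeasureTheory

/-!
Multiplying out, the integrand is the divergence of the vector field `x ↦ q(x) • g(x)`. By the
divergence theorem on a box, its integral equals the sum of the fluxes of `q • g` through the
faces, and every face lies in the frontier of the box, where `g`, hence `q • g`, vanishes.
-/

section Box

variable {ι α : Type*} [Finite ι] [LinearOrder α] [TopologicalSpace α] [OrderTopology α]
  [DenselyOrdered α] [NoMinOrder α] [NoMaxOrder α]

theorem interior_Icc_pi (a b : ι → α) :
    interior (Set.Icc a b) = Set.pi Set.univ fun i => Set.Ioo (a i) (b i) := by
  rw [← Set.pi_univ_Icc, interior_pi_set Set.finite_univ]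
  simp only [interior_Icc]

theorem Fin.insertNth_mem_frontier_Icc {n : ℕ} {a b : Fin (n + 1) → α} (i : Fin (n + 1))
    (hab : a i ≤ b i) {c : α} (hc : c = a i ∨ c = b i)
    {x : Fin n → α} (hx : x ∈ Set.Icc (a ∘ i.succAbove) (b ∘ i.succAbove)) :
    i.insertNth c x ∈ frontier (Set.Icc a b) := by
  rw [frontier, isClosed_Icc.closure_eq, interior_Icc_pi]
  refine ⟨Fin.insertNth_mem_Icc.2 ⟨?_, hx⟩, fun hmem => ?_⟩
  · rcases hc with rfl | rfl
    exacts [⟨le_rfl, hab⟩, ⟨hab, le_rfl⟩]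
  · have hci := hmem i (Set.mem_univ i)
    rw [Fin.insertNth_apply_same] at hci
    rcases hc with rfl | rfl
    exacts [lt_irrefl _ hci.1, lt_irrefl _ hci.2]

end Box

theorem integral_divergence_Icc_eq_zero_of_vanishing_on_frontier {E : Type*} [NormedAddCommGroup E]
    [NormedSpace ℝ E] [CompleteSpace E] {d : ℕ} {a b : Fin d → ℝ}
    (f : Fin d → (Fin d → ℝ) → E) (f' : Fin d → (Fin d → ℝ) → (Fin d → ℝ) →L[ℝ] E)
    (hfc : ∀ i, ContinuousOn (f i) (Set.Icc a b))
    (hfd : ∀ x ∈ interior (Set.Icc a b), ∀ i, HasFDerivAt (f i) (f' i x) x)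
    (hint : IntegrableOn (fun x => ∑ i, f' i x (Pi.single i 1)) (Set.Icc a b))
    (hf0 : ∀ x ∈ frontier (Set.Icc a b), ∀ i, f i x = 0) :
    ∫ x in Set.Icc a b, ∑ i, f' i x (Pi.single i 1) = 0 := by
  obtain _ | n := d
  · simp
  by_cases hab : a ≤ b
  swap
  · simp [Set.Icc_eq_empty hab]
  rw [integral_divergence_of_hasFDerivAt_off_countable' a b hab f f' ∅ Set.countable_empty hfc
    (fun x hx => hfd x (by rwa [Set.sdiff_empty, ← interior_Icc_pi] at hx)) hint]
  refine Finset.sum_eq_zero fun i _ => ?_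
  have hface : ∀ c, c = a i ∨ c = b i →
      Set.EqOn (fun x => f i (i.insertNth c x)) 0 (Set.Icc (a ∘ i.succAbove) (b ∘ i.succAbove)) :=
    fun c hc x hx => hf0 _ (Fin.insertNth_mem_frontier_Icc i (hab i) hc hx) i
  rw [setIntegral_congr_fun measurableSet_Icc (hface _ (.inr rfl)),
    setIntegral_congr_fun measurableSet_Icc (hface _ (.inl rfl))]
  simp

theorem stein_identity_truncated_box_general
    {d : ℕ} (a b : Fin d → ℝ)
    (V : Set (Fin d → ℝ)) (hV : V = Set.Icc a b)
    (q : (Fin d → ℝ) → ℝ) (g : (Fin d → ℝ) → Fin d → ℝ)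
    (hqc : ContinuousOn q V) (hqd : DifferentiableOn ℝ q (interior V))
    (hgc : ContinuousOn g V)
    (hgd : ∀ l, DifferentiableOn ℝ (fun y => g y l) (interior V))
    (hg0 : ∀ x ∈ frontier V, g x = 0)
    (hint : IntegrableOn
      (fun x => ∑ l, (fderiv ℝ q x (Pi.single l 1) * g x l
        + q x * fderiv ℝ (fun y => g y l) x (Pi.single l 1))) V volume) :
    ∫ x in V, (∑ l, (fderiv ℝ q x (Pi.single l 1) * g x l
        + q x * fderiv ℝ (fun y => g y l) x (Pi.single l 1))) ∂volume = 0 := by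
  subst hV
  have hdiv : ∀ x, (∑ l, (q x • fderiv ℝ (fun y => g y l) x + g x l • fderiv ℝ q x)
      (Pi.single l 1)) = ∑ l, (fderiv ℝ q x (Pi.single l 1) * g x l
        + q x * fderiv ℝ (fun y => g y l) x (Pi.single l 1)) := fun x =>
    Finset.sum_congr rfl fun l _ => by
      simp only [add_apply, smul_apply, smul_eq_mul]
      ring
  simp_rw [← hdiv] at hint ⊢
  refine integral_divergence_Icc_eq_zero_of_vanishing_on_frontier (fun l x => q x * g x l) _
    (fun l => hqc.mul (continuousOn_pi.1 hgc l)) (fun x hx l => ?_) hint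
    (fun x hx l => by simp [hg0 x hx])
  have hx : interior (Set.Icc a b) ∈ nhds x := isOpen_interior.mem_nhds hx
  exact (hqd.differentiableAt hx).hasFDerivAt.mul ((hgd l).differentiableAt hx).hasFDerivAt

/-- Stein's identity for truncated densities (Lemma 5.1) on a rectangular box
`V = Icc a b ⊆ ℝ^d`: for a positive density `q` and a vector field `g` vanishing on the
topological boundary of `V`,
`∫_V ∑ l (∂ₗ q(x) · gₗ(x) + q(x) · ∂ₗ gₗ(x)) dx = 0`. -/
theorem stein_identity_truncated_box
    {d : ℕ} (hd : 1 ≤ d) (a b : Fin d → ℝ) (hab : ∀ l, a l < b l)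
    (V : Set (Fin d → ℝ)) (hV : V = Set.Icc a b)
    (q : (Fin d → ℝ) → ℝ) (g : (Fin d → ℝ) → Fin d → ℝ)
    (hqc : ContinuousOn q V) (hqd : DifferentiableOn ℝ q (interior V))
    (hqpos : ∀ x ∈ V, 0 < q x)
    (hgc : ContinuousOn g V)
    (hgd : ∀ l, DifferentiableOn ℝ (fun y => g y l) (interior V))
    (hg0 : ∀ x ∈ frontier V, g x = 0)
    (hint : IntegrableOn
      (fun x => ∑ l, (fderiv ℝ q x (Pi.single l 1) * g x l
        + q x * fderiv ℝ (fun y => g y l) x (Pi.single l 1))) V volume) :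
    ∫ x in V, (∑ l, (fderiv ℝ q x (Pi.single l 1) * g x l
        + q x * fderiv ℝ (fun y => g y l) x (Pi.single l 1))) ∂volume = 0 :=
  stein_identity_truncated_box_general a b V hV q g hqc hqd hgc hgd hg0 hint
end

section
/- Let a < b be real numbers, and let ε ≥ 0 and C ≥ 0. Let q : ℝ → ℝ be continuous on [a, b], differentiable on (a, b), and nonnegative on [a, b]; let g̃ : ℝ → ℝ be differentiable on ℝ and C-Lipschitz. Suppose there exist points ã, b̃ ∈ ℝ with |ã − a| ≤ ε and |b̃ − b| ≤ ε such that g̃(ã) = 0 and g̃(b̃) = 0, and assume x ↦ q'(x) g̃(x) + q(x) g̃'(x) is integrable on [a, b]. Then | ∫_a^b ( q'(x) g̃(x) + q(x) g̃'(x) ) dx | ≤ C ε ( q(a) + q(b) ). In particular, if q is a probability density supported on [a, b], then |E_{x∼q}[ ∂_x log q(x) · g̃(x) + g̃'(x) ]| ≤ C ε ( q(a) + q(b) ). -/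
open MeasureTheory

/-- Approximate Stein identity in one dimension (Theorem 5.4 for `V = [a, b]`): if the
`C`-Lipschitz function `g` vanishes at points `aT, bT` within distance `ε` of the boundary
points `a, b`, then the Stein integral is bounded by `C ε (q(a) + q(b))`. -/
theorem approx_stein_identity_1d
    (a b : ℝ) (hab : a < b) (ε C : ℝ) (hε : 0 ≤ ε) (hC : 0 ≤ C)
    (q q' g g' : ℝ → ℝ)
    (hqc : ContinuousOn q (Set.Icc a b))
    (hqd : ∀ x ∈ Set.Ioo a b, HasDerivAt q (q' x) x)
    (hqnn : ∀ x ∈ Set.Icc a b, 0 ≤ q x)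
    (hgd : ∀ x, HasDerivAt g (g' x) x)
    (hglip : ∀ x y, |g x - g y| ≤ C * |x - y|)
    (aT bT : ℝ) (haT : |aT - a| ≤ ε) (hbT : |bT - b| ≤ ε)
    (hgaT : g aT = 0) (hgbT : g bT = 0)
    (hint : IntegrableOn (fun x => q' x * g x + q x * g' x) (Set.Icc a b) volume) :
    |∫ x in a..b, (q' x * g x + q x * g' x)| ≤ C * ε * (q a + q b) := by
  have hqa : 0 ≤ q a := hqnn a ⟨le_refl _, hab.le⟩
  have hqb : 0 ≤ q b := hqnn b ⟨hab.le, le_refl _⟩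
  have hd : ∀ x ∈ Set.Ioo a b, HasDerivAt (fun y => q y * g y)
      (q' x * g x + q x * g' x) x := fun x hx => (hqd x hx).mul (hgd x)
  have hcont : ContinuousOn (fun y => q y * g y) (Set.Icc a b) :=
    hqc.mul (fun x _ => (hgd x).continuousAt.continuousWithinAt)
  have heq : ∫ x in a..b, (q' x * g x + q x * g' x) = q b * g b - q a * g a := by
    apply intervalIntegral.integral_eq_sub_of_hasDerivAt_of_le hab.le hcont hd
    rw [intervalIntegrable_iff_integrableOn_Ioc_of_le hab.le]
    exact hint.mono_set Set.Ioc_subset_Icc_self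
  have hga : |g a| ≤ C * ε := by
    calc |g a| = |g a - g aT| := by rw [hgaT, sub_zero]
    _ ≤ C * |a - aT| := hglip a aT
    _ ≤ C * ε := by
        refine mul_le_mul_of_nonneg_left ?_ hC
        rwa [abs_sub_comm] at haT
  have hgb : |g b| ≤ C * ε := by
    calc |g b| = |g b - g bT| := by rw [hgbT, sub_zero]
    _ ≤ C * |b - bT| := hglip b bT
    _ ≤ C * ε := by
        refine mul_le_mul_of_nonneg_left ?_ hC
        rwa [abs_sub_comm] at hbT
  rw [heq]
  calc |q b * g b - q a * g a| ≤ |q b * g b| + |q a * g a| := abs_sub _ _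
  _ = q b * |g b| + q a * |g a| := by
      rw [abs_mul, abs_mul, abs_of_nonneg hqb, abs_of_nonneg hqa]
  _ ≤ q b * (C * ε) + q a * (C * ε) :=
      add_le_add (mul_le_mul_of_nonneg_left hgb hqb) (mul_le_mul_of_nonneg_left hga hqa)
  _ = C * ε * (q a + q b) := by ring
end
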